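/- arXiv:2207.13465 — 8 statements merged into one kernel-verified Lean document; each statement's English description precedes it below -/
import Mathlib

section
/- Let (C, E, s) be an n-exangulated category and let ⟨X•, δ⟩ be a distinguished n-exangle with δ ∈ E(X_{n+1}, X_0). Then the following are equivalent: (1) δ = 0; (2) there exists r : X_1 → X_0 with r ∘ d⁰_X = 1_{X_0}; (3) there exists s : X_{n+1} → X_n with dⁿ_X ∘ s = 1_{X_{n+1}}. -/
/-!  A self-contained axiomatization of `n`-exangulated categories
(Herschend–Liu–Nakaoka) together with the ideal-approximation notions
(ideals, orthogonals, phantom morphisms, special precovers, etc.). -/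

open CategoryTheory

universe v u

/-- An `n`-exangulated structure on a preadditive category `C`: a biadditive
`Ab`-valued bifunctor `E` together with a class `Dist` of distinguished
`n`-exangles (complexes `X 0 → ⋯ → X (n+1)` with an extension
`δ ∈ E (X (n+1)) (X 0)`), satisfying functoriality, biadditivity, the exactness
conditions defining `n`-exangles, existence of realizations and of lifts. -/
structure NEx (n : ℕ) (C : Type u) [Category.{v} C] [Preadditive C] where
  E : C → C → Type v
  zero : ∀ {X A : C}, E X A
  add : ∀ {X A : C}, E X A → E X A → E X A
  neg : ∀ {X A : C}, E X A → E X A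
  pull : ∀ {X X' A : C}, (X' ⟶ X) → E X A → E X' A
  push : ∀ {X A A' : C}, (A ⟶ A') → E X A → E X A'
  pull_id : ∀ {X A : C} (δ : E X A), pull (𝟙 X) δ = δ
  push_id : ∀ {X A : C} (δ : E X A), push (𝟙 A) δ = δ
  pull_comp : ∀ {X X' X'' A : C} (f : X' ⟶ X) (g : X'' ⟶ X') (δ : E X A),
    pull g (pull f δ) = pull (g ≫ f) δ
  push_comp : ∀ {X A A' A'' : C} (f : A ⟶ A') (g : A' ⟶ A'') (δ : E X A),
    push g (push f δ) = push (f ≫ g) δ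
  pull_push : ∀ {X X' A A' : C} (f : X' ⟶ X) (g : A ⟶ A') (δ : E X A),
    pull f (push g δ) = push g (pull f δ)
  eadd_comm : ∀ {X A : C} (a b : E X A), add a b = add b a
  eadd_assoc : ∀ {X A : C} (a b c : E X A), add (add a b) c = add a (add b c)
  ezero_add : ∀ {X A : C} (a : E X A), add zero a = a
  eneg_add : ∀ {X A : C} (a : E X A), add (neg a) a = zero
  pull_zero : ∀ {X X' A : C} (f : X' ⟶ X), pull f (zero : E X A) = zero
  push_zero : ∀ {X A A' : C} (g : A ⟶ A'), push g (zero : E X A) = zero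
  pull_add : ∀ {X X' A : C} (f : X' ⟶ X) (a b : E X A),
    pull f (add a b) = add (pull f a) (pull f b)
  push_add : ∀ {X A A' : C} (g : A ⟶ A') (a b : E X A),
    push g (add a b) = add (push g a) (push g b)
  pull_zero_mor : ∀ {X X' A : C} (δ : E X A), pull (0 : X' ⟶ X) δ = zero
  push_zero_mor : ∀ {X A A' : C} (δ : E X A), push (0 : A ⟶ A') δ = zero
  pull_add_mor : ∀ {X X' A : C} (f g : X' ⟶ X) (δ : E X A),
    pull (f + g) δ = add (pull f δ) (pull g δ)
  push_add_mor : ∀ {X A A' : C} (f g : A ⟶ A') (δ : E X A),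
    push (f + g) δ = add (push f δ) (push g δ)
  Dist : ∀ (X : ℕ → C) (_ : ∀ i, X i ⟶ X (i + 1)), E (X (n + 1)) (X 0) → Prop
  dist_d_comp : ∀ {X : ℕ → C} {d : ∀ i, X i ⟶ X (i + 1)} {δ : E (X (n + 1)) (X 0)},
    Dist X d δ → ∀ i < n, d i ≫ d (i + 1) = 0
  dist_pull_d : ∀ {X : ℕ → C} {d : ∀ i, X i ⟶ X (i + 1)} {δ : E (X (n + 1)) (X 0)},
    Dist X d δ → pull (d n) δ = zero
  dist_push_d : ∀ {X : ℕ → C} {d : ∀ i, X i ⟶ X (i + 1)} {δ : E (X (n + 1)) (X 0)},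
    Dist X d δ → push (d 0) δ = zero
  dist_exact_last : ∀ {X : ℕ → C} {d : ∀ i, X i ⟶ X (i + 1)} {δ : E (X (n + 1)) (X 0)},
    Dist X d δ → ∀ {T : C} (g : T ⟶ X (n + 1)),
    pull g δ = zero → ∃ h : T ⟶ X n, h ≫ d n = g
  dist_exact_first : ∀ {X : ℕ → C} {d : ∀ i, X i ⟶ X (i + 1)} {δ : E (X (n + 1)) (X 0)},
    Dist X d δ → ∀ {T : C} (g : X 0 ⟶ T),
    push g δ = zero → ∃ h : X 1 ⟶ T, d 0 ≫ h = g
  dist_exact_contra : ∀ {X : ℕ → C} {d : ∀ i, X i ⟶ X (i + 1)} {δ : E (X (n + 1)) (X 0)},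
    Dist X d δ → ∀ i < n, ∀ {T : C} (g : T ⟶ X (i + 1)),
    g ≫ d (i + 1) = 0 → ∃ h : T ⟶ X i, h ≫ d i = g
  dist_exact_cov : ∀ {X : ℕ → C} {d : ∀ i, X i ⟶ X (i + 1)} {δ : E (X (n + 1)) (X 0)},
    Dist X d δ → ∀ i < n, ∀ {T : C} (g : X (i + 1) ⟶ T),
    d i ≫ g = 0 → ∃ h : X (i + 2) ⟶ T, d (i + 1) ≫ h = g
  realize : ∀ {A B : C} (δ : E B A), ∃ (X : ℕ → C) (d : ∀ i, X i ⟶ X (i + 1))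
    (hA : X 0 = A) (hB : X (n + 1) = B),
    Dist X d (cast (by rw [hA, hB]) δ)
  lift : ∀ {X Y : ℕ → C} {dX : ∀ i, X i ⟶ X (i + 1)} {dY : ∀ i, Y i ⟶ Y (i + 1)}
    {δ : E (X (n + 1)) (X 0)} {η : E (Y (n + 1)) (Y 0)},
    Dist X dX δ → Dist Y dY η →
    ∀ (a : X 0 ⟶ Y 0) (c : X (n + 1) ⟶ Y (n + 1)), push a δ = pull c η →
    ∃ f : ∀ i, X i ⟶ Y i, f 0 = a ∧ f (n + 1) = c ∧
      ∀ i ≤ n, dX i ≫ f (i + 1) = f i ≫ dY i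

namespace NEx

variable {n : ℕ} {C : Type u} [Category.{v} C] [Preadditive C]

/-- `E(f, g) = 0` : the composite map `E(A', B) → E(A, B')` induced by
`f : A ⟶ A'` and `g : B ⟶ B'` vanishes. -/
def Evanish (D : NEx n C) {A A' B B' : C} (f : A ⟶ A') (g : B ⟶ B') : Prop :=
  ∀ δ : D.E A' B, D.push g (D.pull f δ) = D.zero

/-- The right orthogonal class `M^⊥ = { g | E(m, g) = 0 for all m ∈ M }`. -/
def rightOrth (D : NEx n C) (M : MorphismProperty C) : MorphismProperty C :=
  fun _ _ g => ∀ ⦃A A' : C⦄ (m : A ⟶ A'), M m → D.Evanish m g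

/-- The left orthogonal class `^⊥M = { f | E(f, m) = 0 for all m ∈ M }`. -/
def leftOrth (D : NEx n C) (M : MorphismProperty C) : MorphismProperty C :=
  fun _ _ f => ∀ ⦃B B' : C⦄ (m : B ⟶ B'), M m → D.Evanish f m

end NEx

/-- A two-sided ideal of a preadditive category: a collection of morphisms
containing zero morphisms, closed under addition of parallel morphisms and
under composition on both sides with arbitrary morphisms. -/
def IsCatIdeal {C : Type u} [Category.{v} C] [Preadditive C]
    (I : MorphismProperty C) : Prop :=
  (∀ ⦃A B : C⦄, I (0 : A ⟶ B)) ∧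
  (∀ ⦃A B : C⦄ (f g : A ⟶ B), I f → I g → I (f + g)) ∧
  (∀ ⦃A B D' : C⦄ (f : A ⟶ B) (g : B ⟶ D'), I g → I (f ≫ g)) ∧
  (∀ ⦃A B D' : C⦄ (f : A ⟶ B) (g : B ⟶ D'), I f → I (f ≫ g))

namespace NEx

variable {n : ℕ} {C : Type u} [Category.{v} C] [Preadditive C]

/-- `(I, J)` is an `n`-orthogonal pair of ideals. -/
def OrthPair (D : NEx n C) (I J : MorphismProperty C) : Prop :=
  ∀ ⦃A A' B B' : C⦄ (f : A ⟶ A') (g : B ⟶ B'), I f → J g → D.Evanish f g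

/-- `(I, J)` is an `n`-ideal cotorsion pair: an orthogonal pair with
`I = ^⊥J` and `J = I^⊥`. -/
def CotorsionPair (D : NEx n C) (I J : MorphismProperty C) : Prop :=
  D.OrthPair I J ∧ (∀ ⦃A A' : C⦄ (f : A ⟶ A'), D.leftOrth J f ↔ I f) ∧
    (∀ ⦃B B' : C⦄ (g : B ⟶ B'), D.rightOrth I g ↔ J g)

/-- `F` is an additive subfunctor of `E` (equivalently, an almost `n`-exact
structure): subgroups closed under the functorial actions of `E`. -/
def IsSubfunctor (D : NEx n C) (F : ∀ ⦃X A : C⦄, D.E X A → Prop) : Prop :=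
  (∀ ⦃X A : C⦄, F (D.zero : D.E X A)) ∧
  (∀ ⦃X A : C⦄ (a b : D.E X A), F a → F b → F (D.add a b)) ∧
  (∀ ⦃X A : C⦄ (a : D.E X A), F a → F (D.neg a)) ∧
  (∀ ⦃X X' A : C⦄ (f : X' ⟶ X) (δ : D.E X A), F δ → F (D.pull f δ)) ∧
  (∀ ⦃X A A' : C⦄ (g : A ⟶ A') (δ : D.E X A), F δ → F (D.push g δ))

/-- The ideal `Ph(F)` of `n`-`F`-phantom morphisms: `φ` with `φ^*δ ∈ F`
for every extension `δ` out of the codomain of `φ`. -/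
def Ph (D : NEx n C) (F : ∀ ⦃X A : C⦄, D.E X A → Prop) : MorphismProperty C :=
  fun _ Cc φ => ∀ ⦃A : C⦄ (δ : D.E Cc A), F (D.pull φ δ)

/-- The ideal `CoPh(F)` of `n`-`F`-cophantom morphisms. -/
def CoPh (D : NEx n C) (F : ∀ ⦃X A : C⦄, D.E X A → Prop) : MorphismProperty C :=
  fun A _ g => ∀ ⦃X : C⦄ (δ : D.E X A), F (D.push g δ)

/-- The ideal `F`-inj of `F`-injective morphisms: `g : A ⟶ A'` with
`F(X, g) = 0` for every `X`. -/
def FInj (D : NEx n C) (F : ∀ ⦃X A : C⦄, D.E X A → Prop) : MorphismProperty C :=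
  fun A _ g => ∀ ⦃X : C⦄ (δ : D.E X A), F δ → D.push g δ = D.zero

/-- The ideal `F`-proj of `F`-projective morphisms. -/
def FProj (D : NEx n C) (F : ∀ ⦃X A : C⦄, D.E X A → Prop) : MorphismProperty C :=
  fun _ Cc f => ∀ ⦃A : C⦄ (δ : D.E Cc A), F δ → D.pull f δ = D.zero

/-- The subfunctor `PB(I)` of extensions of the form `f^*δ` with `f ∈ I`. -/
def PB (D : NEx n C) (I : MorphismProperty C) : ∀ ⦃X A : C⦄, D.E X A → Prop :=
  fun X' A δ' => ∃ (X : C) (f : X' ⟶ X) (δ : D.E X A), I f ∧ δ' = D.pull f δ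

/-- A projective morphism `p : P ⟶ A` : `E(p, B) = 0` for all `B`. -/
def ProjMor (D : NEx n C) {P A : C} (p : P ⟶ A) : Prop :=
  ∀ ⦃B : C⦄ (η : D.E A B), D.pull p η = D.zero

/-- An injective morphism `e : K ⟶ X` : `E(B, e) = 0` for all `B`. -/
def InjMor (D : NEx n C) {K X : C} (e : K ⟶ X) : Prop :=
  ∀ ⦃B : C⦄ (η : D.E B K), D.push e η = D.zero

/-- `f` is an `s`-inflation: the first map of some distinguished `n`-exangle. -/
def IsInflation (D : NEx n C) {A B : C} (f : A ⟶ B) : Prop :=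
  ∃ (X : ℕ → C) (d : ∀ i, X i ⟶ X (i + 1)) (hA : X 0 = A) (hB : X 1 = B)
    (δ : D.E (X (n + 1)) (X 0)), D.Dist X d δ ∧
      d 0 = eqToHom hA ≫ f ≫ eqToHom hB.symm

/-- `f` is an `s`-deflation: the last map of some distinguished `n`-exangle. -/
def IsDeflation (D : NEx n C) {A B : C} (f : A ⟶ B) : Prop :=
  ∃ (X : ℕ → C) (d : ∀ i, X i ⟶ X (i + 1)) (hA : X n = A) (hB : X (n + 1) = B)
    (δ : D.E (X (n + 1)) (X 0)), D.Dist X d δ ∧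
      d n = eqToHom hA ≫ f ≫ eqToHom hB.symm

/-- `f` is an `F`-inflation: the first map of a distinguished `n`-exangle
whose extension lies in `F`. -/
def IsFInflation (D : NEx n C) (F : ∀ ⦃X A : C⦄, D.E X A → Prop)
    {A B : C} (f : A ⟶ B) : Prop :=
  ∃ (X : ℕ → C) (d : ∀ i, X i ⟶ X (i + 1)) (hA : X 0 = A) (hB : X 1 = B)
    (δ : D.E (X (n + 1)) (X 0)), D.Dist X d δ ∧ F δ ∧
      d 0 = eqToHom hA ≫ f ≫ eqToHom hB.symm

/-- `i : Yn ⟶ Cc` is a special `I`-precover of `Cc`: a morphism of `I` which is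
the deflation of a distinguished `n`-exangle realizing `j_*δ` for some
`δ ∈ E(Cc, A)` and some `j : A ⟶ A'` in `I^⊥`. -/
def IsSpecialPrecover (D : NEx n C) (I : MorphismProperty C)
    {Yn Cc : C} (i : Yn ⟶ Cc) : Prop :=
  I i ∧ ∃ (A A' : C) (δ : D.E Cc A) (j : A ⟶ A'), D.rightOrth I j ∧
    ∃ (Y : ℕ → C) (d : ∀ k, Y k ⟶ Y (k + 1)) (h0 : Y 0 = A') (hn : Y n = Yn)
      (hc : Y (n + 1) = Cc),
      D.Dist Y d (cast (by rw [h0, hc]) (D.push j δ)) ∧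
        d n = eqToHom hn ≫ i ≫ eqToHom hc.symm

/-- `I` is a special precovering ideal. -/
def IsSpecialPrecovering (D : NEx n C) (I : MorphismProperty C) : Prop :=
  ∀ Cc : C, ∃ (Yn : C) (i : Yn ⟶ Cc), D.IsSpecialPrecover I i

/-- `j : A ⟶ X1` is a special `J`-preenvelope of `A`. -/
def IsSpecialPreenvelope (D : NEx n C) (J : MorphismProperty C)
    {A X1 : C} (j : A ⟶ X1) : Prop :=
  J j ∧ ∃ (Cc Cd : C) (δ : D.E Cd A) (i : Cc ⟶ Cd), D.leftOrth J i ∧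
    ∃ (X : ℕ → C) (d : ∀ k, X k ⟶ X (k + 1)) (h0 : X 0 = A) (h1 : X 1 = X1)
      (hc : X (n + 1) = Cc),
      D.Dist X d (cast (by rw [h0, hc]) (D.pull i δ)) ∧
        d 0 = eqToHom h0 ≫ j ≫ eqToHom h1.symm

/-- `J` is a special preenveloping ideal. -/
def IsSpecialPreenveloping (D : NEx n C) (J : MorphismProperty C) : Prop :=
  ∀ A : C, ∃ (X1 : C) (j : A ⟶ X1), D.IsSpecialPreenvelope J j

/-- `F` has enough injective morphisms. -/
def HasEnoughInjMor (D : NEx n C) (F : ∀ ⦃X A : C⦄, D.E X A → Prop) : Prop :=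
  ∀ A : C, ∃ (X : ℕ → C) (d : ∀ i, X i ⟶ X (i + 1)) (h0 : X 0 = A)
    (δ : D.E (X (n + 1)) (X 0)),
    D.Dist X d δ ∧ F δ ∧ D.FInj F (eqToHom h0.symm ≫ d 0)

/-- `F` has enough special injective morphisms: the distinguished
`n`-`F`-exangle is obtained by base change along an `n`-`F`-phantom morphism. -/
def HasEnoughSpecialInjMor (D : NEx n C)
    (F : ∀ ⦃X A : C⦄, D.E X A → Prop) : Prop :=
  ∀ A : C, ∃ (X : ℕ → C) (d : ∀ i, X i ⟶ X (i + 1)) (h0 : X 0 = A)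
    (C' : C) (f : X (n + 1) ⟶ C') (δ : D.E C' (X 0)),
    D.Ph F f ∧ D.Dist X d (D.pull f δ) ∧ D.FInj F (eqToHom h0.symm ≫ d 0)

/-- `C` has enough projective morphisms: every object is the target of the
deflation of a distinguished `n`-exangle ending in a projective morphism. -/
def HasEnoughProjMor (D : NEx n C) : Prop :=
  ∀ A : C, ∃ (P : ℕ → C) (d : ∀ i, P i ⟶ P (i + 1)) (hA : P (n + 1) = A)
    (δ : D.E (P (n + 1)) (P 0)), D.Dist P d δ ∧ D.ProjMor (d n)

/-- An `s`-injective object: `E(X, E0) = 0` for all `X`. -/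
def IsInjObj (D : NEx n C) (E0 : C) : Prop :=
  ∀ ⦃X : C⦄ (x : D.E X E0), x = D.zero

/-- An `s`-projective object: `E(P, A) = 0` for all `A`. -/
def IsProjObj (D : NEx n C) (P : C) : Prop :=
  ∀ ⦃A : C⦄ (x : D.E P A), x = D.zero

/-- Enough `s`-injective objects. -/
def HasEnoughInjObj (D : NEx n C) : Prop :=
  ∀ A : C, ∃ (X : ℕ → C) (d : ∀ i, X i ⟶ X (i + 1)) (_ : X 0 = A)
    (δ : D.E (X (n + 1)) (X 0)),
    D.Dist X d δ ∧ ∀ k, 1 ≤ k → k ≤ n → D.IsInjObj (X k)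

/-- `J` is closed under `n`-extensions by `s`-injective objects. -/
def ClosedExtByInj (D : NEx n C) (J : MorphismProperty C) : Prop :=
  ∀ ⦃X Y : ℕ → C⦄ ⦃dX : ∀ i, X i ⟶ X (i + 1)⦄ ⦃dY : ∀ i, Y i ⟶ Y (i + 1)⦄
    ⦃δ : D.E (X (n + 1)) (X 0)⦄ ⦃η : D.E (Y (n + 1)) (Y 0)⦄ (f : ∀ k, X k ⟶ Y k),
    D.Dist X dX δ → D.Dist Y dY η →
    (∀ k ≤ n, dX k ≫ f (k + 1) = f k ≫ dY k) →
    D.push (f 0) δ = D.pull (f (n + 1)) η →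
    J (f 0) → D.IsInjObj (X (n + 1)) →
    ∀ k, 1 ≤ k → k ≤ n → J (f k)

/-- `I` is closed under `n`-coextensions by `s`-projective objects. -/
def ClosedCoextByProj (D : NEx n C) (I : MorphismProperty C) : Prop :=
  ∀ ⦃X Y : ℕ → C⦄ ⦃dX : ∀ i, X i ⟶ X (i + 1)⦄ ⦃dY : ∀ i, Y i ⟶ Y (i + 1)⦄
    ⦃δ : D.E (X (n + 1)) (X 0)⦄ ⦃η : D.E (Y (n + 1)) (Y 0)⦄ (f : ∀ k, X k ⟶ Y k),
    D.Dist X dX δ → D.Dist Y dY η →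
    (∀ k ≤ n, dX k ≫ f (k + 1) = f k ≫ dY k) →
    D.push (f 0) δ = D.pull (f (n + 1)) η →
    I (f (n + 1)) → D.IsProjObj (Y 0) →
    ∀ k, 1 ≤ k → k ≤ n → I (f k)

/-- An `E`-triangle `A → B → Cc` realizing `δ`, in an extriangulated
(`1`-exangulated) category. -/
def Tri (D : NEx 1 C) {A B Cc : C} (f : A ⟶ B) (g : B ⟶ Cc)
    (δ : D.E Cc A) : Prop :=
  ∃ (X : ℕ → C) (d : ∀ i, X i ⟶ X (i + 1)) (hA : X 0 = A) (hB : X 1 = B)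
    (hC : X (1 + 1) = Cc),
    D.Dist X d (cast (by rw [hA, hC]) δ) ∧
      d 0 = eqToHom hA ≫ f ≫ eqToHom hB.symm ∧
      d 1 = eqToHom hB ≫ g ≫ eqToHom hC.symm

end NEx

/-- The full setting of Sections 2.2 and 5 of the paper: an extriangulated
category `(C, E, s)` satisfying the condition (WIC), equipped with higher
extension groups `Epow`, and a nicely embedded `n`-cluster tilting subcategory
`T`, which then carries an `n`-exangulated structure `(T, Eⁿ, sⁿ)`. -/
structure NiceSetup (n : ℕ) (C : Type u) [Category.{v} C] [Preadditive C] where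
  /-- the underlying extriangulated (`1`-exangulated) category -/
  base : NEx 1 C
  /-- condition (WIC), part 1 -/
  wic_inf : ∀ ⦃X Y Z : C⦄ (f : X ⟶ Y) (g : Y ⟶ Z),
    base.IsInflation (f ≫ g) → base.IsInflation f
  /-- condition (WIC), part 2 -/
  wic_def : ∀ ⦃X Y Z : C⦄ (f : X ⟶ Y) (g : Y ⟶ Z),
    base.IsDeflation (f ≫ g) → base.IsDeflation g
  /-- the class of objects of the cluster tilting subcategory -/
  T : C → Prop
  /-- higher extension groups `Eⁱ` -/
  Epow : ℕ → C → C → Type v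
  EpowZero : ∀ (i : ℕ) (X A : C), Epow i X A
  Epow_one : ∀ X A : C, Epow 1 X A = base.E X A
  /-- cluster tilting: `X ∈ T ↔ Eⁱ(X, T) = 0` for `1 ≤ i ≤ n - 1` -/
  tilt_right : ∀ X : C, T X ↔ ∀ i, 1 ≤ i → i ≤ n - 1 →
    ∀ ⦃A : C⦄, T A → ∀ x : Epow i X A, x = EpowZero i X A
  /-- cluster tilting: `X ∈ T ↔ Eⁱ(T, X) = 0` for `1 ≤ i ≤ n - 1` -/
  tilt_left : ∀ X : C, T X ↔ ∀ i, 1 ≤ i → i ≤ n - 1 →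
    ∀ ⦃A : C⦄, T A → ∀ x : Epow i A X, x = EpowZero i A X
  /-- functorial finiteness: right `T`-approximations, which are deflations -/
  approx_right : ∀ X : C, ∃ (T' : C) (g : T' ⟶ X), T T' ∧ base.IsDeflation g ∧
    ∀ ⦃T'' : C⦄ (h : T'' ⟶ X), T T'' → ∃ k, k ≫ g = h
  /-- functorial finiteness: left `T`-approximations, which are inflations -/
  approx_left : ∀ X : C, ∃ (T' : C) (g : X ⟶ T'), T T' ∧ base.IsInflation g ∧
    ∀ ⦃T'' : C⦄ (h : X ⟶ T''), T T'' → ∃ k, g ≫ k = h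
  /-- nicely embedded, condition (1) -/
  nice_right : ∀ Cc : C,
    (∀ ⦃T' : C⦄, T T' → ∀ x : Epow (n - 1) T' Cc, x = EpowZero (n - 1) T' Cc) →
    ∃ (Dd P : C) (q : Dd ⟶ P) (p : P ⟶ Cc) (δ : base.E Cc Dd),
      base.IsProjObj P ∧ base.Tri q p δ ∧
        ∀ ⦃T' : C⦄, T T' → ∀ (a b : T' ⟶ Dd), a ≫ q = b ≫ q → a = b
  /-- nicely embedded, condition (2) -/
  nice_left : ∀ A : C,
    (∀ ⦃T' : C⦄, T T' → ∀ x : Epow (n - 1) A T', x = EpowZero (n - 1) A T') →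
    ∃ (I S : C) (u : A ⟶ I) (jm : I ⟶ S) (δ : base.E S A),
      base.IsInjObj I ∧ base.Tri u jm δ ∧
        ∀ ⦃T' : C⦄, T T' → ∀ (a b : S ⟶ T'), jm ≫ a = jm ≫ b → a = b
  /-- the induced `n`-exangulated structure `(T, Eⁿ, sⁿ)` on `T` -/
  Dn : NEx n (ObjectProperty.FullSubcategory T)
  /-- its extension bifunctor is `Eⁿ` -/
  E_eq : ∀ X A : ObjectProperty.FullSubcategory T, Dn.E X A = Epow n X.obj A.obj

open NEx in
/-- Lemma 2.4 (HLN, Claim 2.15): for a distinguished `n`-exangle `⟨X•, δ⟩`,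
`δ = 0` iff `d⁰` is a split mono iff `dⁿ` is a split epi. -/
theorem stmt_0 {n : ℕ} {C : Type u} [Category.{v} C] [Preadditive C]
    (D : NEx n C) (X : ℕ → C) (d : ∀ i, X i ⟶ X (i + 1))
    (δ : D.E (X (n + 1)) (X 0)) (hd : D.Dist X d δ) :
    (δ = D.zero ↔ ∃ r : X 1 ⟶ X 0, d 0 ≫ r = 𝟙 (X 0)) ∧
    (δ = D.zero ↔ ∃ s : X (n + 1) ⟶ X n, s ≫ d n = 𝟙 (X (n + 1))) := by
  constructor
  · constructor
    · intro h
      exact D.dist_exact_first hd (𝟙 (X 0)) (by rw [h, D.push_zero])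
    · rintro ⟨r, hr⟩
      calc δ = D.push (𝟙 (X 0)) δ := (D.push_id δ).symm
      _ = D.push (d 0 ≫ r) δ := by rw [hr]
      _ = D.push r (D.push (d 0) δ) := (D.push_comp _ _ _).symm
      _ = D.zero := by rw [D.dist_push_d hd, D.push_zero]
  · constructor
    · intro h
      exact D.dist_exact_last hd (𝟙 (X (n+1))) (by rw [h, D.pull_zero])
    · rintro ⟨s, hs⟩
      calc δ = D.pull (𝟙 (X (n+1))) δ := (D.pull_id δ).symm
      _ = D.pull (s ≫ d n) δ := by rw [hs]
      _ = D.pull s (D.pull (d n) δ) := (D.pull_comp _ _ _).symm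
      _ = D.zero := by rw [D.dist_pull_d hd, D.pull_zero]
end

section
/- Let (C, E, s) be an n-exangulated category and f• = (a, f^1, …, f^n, c) : ⟨X•, γ⟩ → ⟨Y•, η⟩ a morphism of distinguished n-exangles (so a_*γ = c^*η). Then a factors through d⁰_X : X_0 → X_1 if and only if c factors through dⁿ_Y : Y_n → Y_{n+1}. -/
/-!  A self-contained axiomatization of `n`-exangulated categories
(Herschend–Liu–Nakaoka) together with the ideal-approximation notions
(ideals, orthogonals, phantom morphisms, special precovers, etc.). -/

open CategoryTheory

universe v u

open NEx in
/-- Lemma 2.9: for a morphism `f• = (a, f¹, …, fⁿ, c)` of distinguished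
`n`-exangles, `a` factors through `d⁰_X` iff `c` factors through `dⁿ_Y`. -/
theorem stmt_1 {n : ℕ} {C : Type u} [Category.{v} C] [Preadditive C]
    (D : NEx n C) (X Y : ℕ → C)
    (dX : ∀ i, X i ⟶ X (i + 1)) (dY : ∀ i, Y i ⟶ Y (i + 1))
    (γ : D.E (X (n + 1)) (X 0)) (η : D.E (Y (n + 1)) (Y 0))
    (hX : D.Dist X dX γ) (hY : D.Dist Y dY η)
    (f : ∀ i, X i ⟶ Y i)
    (hcomm : ∀ i ≤ n, dX i ≫ f (i + 1) = f i ≫ dY i)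
    (hmor : D.push (f 0) γ = D.pull (f (n + 1)) η) :
    (∃ w : X 1 ⟶ Y 0, dX 0 ≫ w = f 0) ↔
    (∃ v : X (n + 1) ⟶ Y n, v ≫ dY n = f (n + 1)) := by
  constructor
  · rintro ⟨w, hw⟩
    apply D.dist_exact_last hY
    rw [← hmor, ← hw, ← D.push_comp, D.dist_push_d hX, D.push_zero]
  · rintro ⟨v, hv⟩
    apply D.dist_exact_first hX
    rw [hmor, ← hv, ← D.pull_comp, D.dist_pull_d hY, D.pull_zero]
end

section
/- Let (C, E, s) be an n-exangulated category and I an ideal of C. If i : Y_n → C is a special I-precover of C, then i is an I-precover of C, i.e., every morphism f : Y → C in I factors through i. -/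
/-!  A self-contained axiomatization of `n`-exangulated categories
(Herschend–Liu–Nakaoka) together with the ideal-approximation notions
(ideals, orthogonals, phantom morphisms, special precovers, etc.). -/

open CategoryTheory

universe v u

open NEx in
/-- Proposition 3.6: a special `I`-precover is an `I`-precover. -/
theorem stmt_3 {n : ℕ} {C : Type u} [Category.{v} C] [Preadditive C]
    (D : NEx n C) (I : MorphismProperty C) (hI : IsCatIdeal I)
    {Yn Cc : C} (i : Yn ⟶ Cc) (hsp : D.IsSpecialPrecover I i) :
    ∀ ⦃Y : C⦄ (f : Y ⟶ Cc), I f → ∃ h : Y ⟶ Yn, h ≫ i = f := by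
  obtain ⟨hIi, A, A', δ, j, hj, X, d, h0, hn, hc, hdist, hdn⟩ := hsp
  subst h0 hn hc
  simp only [cast_eq] at hdist
  intro Yv f hf
  have hvan : D.pull f (D.push j δ) = D.zero := by
    rw [D.pull_push]
    exact hj f hf δ
  obtain ⟨h, hh⟩ := D.dist_exact_last hdist f hvan
  refine ⟨h, ?_⟩
  rw [hdn] at hh
  simpa using hh
end

section
/- Let (C, E, s) be an n-exangulated category and I a special precovering ideal of C (every object admits a special I-precover). Then the pair (I, I^⊥) is an n-ideal cotorsion pair; in particular ^⊥(I^⊥) = I. -/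
/-!  A self-contained axiomatization of `n`-exangulated categories
(Herschend–Liu–Nakaoka) together with the ideal-approximation notions
(ideals, orthogonals, phantom morphisms, special precovers, etc.). -/

open CategoryTheory

universe v u

open NEx in
/-- Theorem 3.7: if `I` is a special precovering ideal then `(I, I^⊥)` is an
`n`-ideal cotorsion pair (in particular `^⊥(I^⊥) = I`). -/
theorem stmt_4 {n : ℕ} {C : Type u} [Category.{v} C] [Preadditive C]
    (D : NEx n C) (I : MorphismProperty C) (hI : IsCatIdeal I)
    (hsp : D.IsSpecialPrecovering I) :
    D.CotorsionPair I (D.rightOrth I) := by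
  refine ⟨?_, ?_, fun B B' g => Iff.rfl⟩
  · intro A A' B B' f g hf hg
    exact hg f hf
  · intro A A' f
    constructor
    · intro hf
      obtain ⟨Yn, i, hi, B, B', δ, j, hj, Y, d, h0, hn, hc, hdist, hdn⟩ := hsp A'
      subst h0; subst hn; subst hc
      rw [cast_eq] at hdist
      simp only [eqToHom_refl, Category.comp_id, Category.id_comp] at hdn
      have hv : D.pull f (D.push j δ) = D.zero := by
        rw [D.pull_push]
        exact hf j hj δ
      obtain ⟨h, hh⟩ := D.dist_exact_last hdist f hv
      rw [hdn] at hh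
      rw [← hh]
      exact hI.2.2.1 h i hi
    · intro hf B B' g hg
      exact hg f hf
end

section
/- Let (C, E, s) be an n-exangulated category and I a special precovering ideal of C. Then I equals the ideal Ph(PB(I)) of n-PB(I)-phantom morphisms. -/
/-!  A self-contained axiomatization of `n`-exangulated categories
(Herschend–Liu–Nakaoka) together with the ideal-approximation notions
(ideals, orthogonals, phantom morphisms, special precovers, etc.). -/

open CategoryTheory

universe v u

open NEx in
/-- Proposition 3.14: a special precovering ideal `I` equals the ideal
`Ph(PB(I))` of `n`-`PB(I)`-phantom morphisms. -/
theorem stmt_7 {n : ℕ} {C : Type u} [Category.{v} C] [Preadditive C]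
    (D : NEx n C) (I : MorphismProperty C) (hI : IsCatIdeal I)
    (hsp : D.IsSpecialPrecovering I) :
    ∀ ⦃X Y : C⦄ (f : X ⟶ Y), I f ↔ D.Ph (D.PB I) f := by
  intro X Y f
  constructor
  · intro hf A δ
    exact ⟨Y, f, δ, hf, rfl⟩
  · intro hf
    obtain ⟨Yn, i, hi, A, A', δ, j, hj, Yf, d, h0, hn, hc, hdist, hdn⟩ := hsp Y
    subst hc; subst hn; subst h0
    simp only [eqToHom_refl, Category.comp_id, Category.id_comp] at hdn
    obtain ⟨Z, g, δ'', hg, heq⟩ := hf δ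
    have hz : D.pull f (D.push j δ) = D.zero := by
      rw [D.pull_push, heq]
      exact hj g hg δ''
    obtain ⟨h, hh⟩ := D.dist_exact_last hdist f hz
    rw [hdn] at hh
    rw [← hh]
    exact hI.2.2.1 h i hi
end

section
/- Let (C, E, s) be an n-exangulated category, I a special precovering ideal, and F = PB(I). Then (Ph(F), F-inj) is an n-ideal cotorsion pair, where F-inj is the ideal of F-injective morphisms. -/
/-!  A self-contained axiomatization of `n`-exangulated categories
(Herschend–Liu–Nakaoka) together with the ideal-approximation notions
(ideals, orthogonals, phantom morphisms, special precovers, etc.). -/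

open CategoryTheory

universe v u

open NEx in
/-- Corollary 3.15: for a special precovering ideal `I` and `F = PB(I)`,
`(Ph(F), F-inj)` is an `n`-ideal cotorsion pair. -/
theorem stmt_8 {n : ℕ} {C : Type u} [Category.{v} C] [Preadditive C]
    (D : NEx n C) (I : MorphismProperty C) (hI : IsCatIdeal I)
    (hsp : D.IsSpecialPrecovering I) :
    D.CotorsionPair (D.Ph (D.PB I)) (D.FInj (D.PB I)) := by
  have hfinj : ∀ ⦃B B' : C⦄ (g : B ⟶ B'), D.FInj (D.PB I) g ↔ D.rightOrth I g := by
    intro B B' g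
    constructor
    · intro hg A A' m hm δ
      exact hg _ ⟨A', m, δ, hm, rfl⟩
    · rintro hg X δ ⟨X0, m, ρ, hm, rfl⟩
      exact hg m hm ρ
  have hIph : ∀ ⦃A A' : C⦄ (m : A ⟶ A'), I m → D.Ph (D.PB I) m := by
    intro A A' m hm B δ
    exact ⟨A', m, δ, hm, rfl⟩
  refine ⟨?_, ?_, ?_⟩
  · intro A A' B B' f g hf hg δ
    exact hg _ (hf δ)
  · intro A A' f
    constructor
    · intro hf B δ
      obtain ⟨Yn, i, hIi, A0, A0', δ₀, j, hj, Y, d, h0, hn, hc, hdist, hdn⟩ := hsp A'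
      subst hc
      subst hn
      subst h0
      rw [cast_eq] at hdist
      have hvan : D.push j (D.pull f δ₀) = D.zero := hf j ((hfinj j).mpr hj) δ₀
      have hpull0 : D.pull f (D.push j δ₀) = D.zero := by
        rw [D.pull_push]; exact hvan
      obtain ⟨h', hh'⟩ := D.dist_exact_last hdist f hpull0
      simp only [eqToHom_refl, Category.comp_id, Category.id_comp] at hdn
      have hfI : I f := by
        rw [← hh', hdn]
        exact hI.2.2.1 h' i hIi
      exact ⟨_, f, δ, hfI, rfl⟩
    · intro hf B B' g hg δ
      exact hg _ (hf δ)
  · intro B B' g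
    constructor
    · rintro hg X δ ⟨X0, m, ρ, hm, rfl⟩
      exact hg m (hIph m hm) ρ
    · intro hg A A' m hm δ
      exact hg _ (hm δ)
end

section
/- Let (C, E, s) be an n-exangulated category and F ⊆ E an additive subfunctor with enough special injective morphisms. Then the ideal F-inj of F-injective morphisms is a special preenveloping ideal. -/
/-!  A self-contained axiomatization of `n`-exangulated categories
(Herschend–Liu–Nakaoka) together with the ideal-approximation notions
(ideals, orthogonals, phantom morphisms, special precovers, etc.). -/

open CategoryTheory

universe v u

open NEx in
/-- Corollary 3.20: if `F ⊆ E` has enough special injective morphisms, then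
the ideal `F-inj` is a special preenveloping ideal. -/
theorem stmt_12 {n : ℕ} {C : Type u} [Category.{v} C] [Preadditive C]
    (D : NEx n C) (F : ∀ ⦃X A : C⦄, D.E X A → Prop) (hF : D.IsSubfunctor F)
    (henough : D.HasEnoughSpecialInjMor F) :
    D.IsSpecialPreenveloping (D.FInj F) := by
  intro A
  obtain ⟨X, d, h0, C', f, δ, hph, hdist, hinj⟩ := henough A
  subst h0
  refine ⟨X 1, d 0, ?_, ?_⟩
  · simpa using hinj
  · exact ⟨X (n + 1), C', δ, f,
      fun B B' m hm δ' => hm (D.pull f δ') (hph δ'),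
      X, d, rfl, rfl, rfl, by simpa using hdist, by simp⟩
end

section
/- Let (C, E, s) be an n-exangulated category and J an ideal. Suppose given a morphism of distinguished n-exangles from ⟨X•, i^*δ⟩ to ⟨Y•, δ⟩ of the form (1_A, …, i) with common first term A, first components j = d⁰_X : A → X_1 and inflation d⁰_Y : A → Y_1, last component i : C' → C. If i ∈ ^⊥J and j ∈ J, then j : A → X_1 is a J-preenvelope of A: every morphism j' : A → D in J factors through j. -/
/-!  A self-contained axiomatization of `n`-exangulated categories
(Herschend–Liu–Nakaoka) together with the ideal-approximation notions
(ideals, orthogonals, phantom morphisms, special precovers, etc.). -/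

open CategoryTheory

universe v u

open NEx in
/-- Lemma 4.2: given a morphism `(1_A, …, i)` of distinguished `n`-exangles
from `⟨X•, i^*δ⟩` to `⟨Y•, δ⟩` with `i ∈ ^⊥J` and `j = d⁰_X ∈ J`, the morphism
`j` is a `J`-preenvelope of `A`. -/
theorem stmt_14 {n : ℕ} {C : Type u} [Category.{v} C] [Preadditive C]
    (D : NEx n C) (J : MorphismProperty C) (hJ : IsCatIdeal J)
    (X Y : ℕ → C) (dX : ∀ i, X i ⟶ X (i + 1)) (dY : ∀ i, Y i ⟶ Y (i + 1))
    (γ : D.E (X (n + 1)) (X 0)) (δ : D.E (Y (n + 1)) (Y 0))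
    (hX : D.Dist X dX γ) (hY : D.Dist Y dY δ)
    (hA : X 0 = Y 0) (f : ∀ k, X k ⟶ Y k)
    (hf0 : f 0 = eqToHom hA)
    (hcomm : ∀ k ≤ n, dX k ≫ f (k + 1) = f k ≫ dY k)
    (hmor : D.push (f 0) γ = D.pull (f (n + 1)) δ)
    (hi : D.leftOrth J (f (n + 1))) (hj : J (dX 0)) :
    ∀ ⦃Dd : C⦄ (j' : X 0 ⟶ Dd), J j' → ∃ h : X 1 ⟶ Dd, dX 0 ≫ h = j' := by
  intro Dd j' hj'
  -- transport j' along hA to get a morphism out of Y 0, still in J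
  have hj'' : J (eqToHom hA.symm ≫ j') := hJ.2.2.1 _ _ hj'
  have hvan : D.push (eqToHom hA.symm ≫ j') (D.pull (f (n + 1)) δ) = D.zero :=
    hi _ hj'' δ
  have hpush : D.push j' γ = D.zero := by
    rw [← hmor, D.push_comp, hf0] at hvan
    simpa using hvan
  exact D.dist_exact_first hX j' hpush
end
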